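/- Let α < 0 and let k ≥ 3 be an integer. Define T_0^{IM}(k) = (k+3)/(2k) + ((k+1)/2)(β/α), T_1^{IM}(k) = (k+3)(k−1)/(2k) + ((k+1)/2)(β/α), and T_{λ*}^{IM}(k) = (k+3)/(2k) + (3/k)(β/α). Then: (i) j_k^{IM}(0) > 0 if and only if x* > T_0^{IM}(k); (ii) j_k^{IM}(1) > 0 if and only if x* > T_1^{IM}(k); (iii) b_k^{IM} > 0 if and only if x* > T_{λ*}^{IM}(k), and consequently, if in addition γ + α > 0 and θ > 0, then λ*_{k,IM} < −(β+α)θ/(γ+α) if and only if x* > T_{λ*}^{IM}(k). -/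

import Mathlib

/-
Writing `γ = -2α x*` turns each numerator into an affine function of `x*`: every quantity in
question is `2k(-α) / ((k+3)(k-2))` times `x*` minus the corresponding threshold. That factor is
positive for `α < 0` and `k > 2`, so each sign condition is exactly `x*` exceeding its threshold.
The comparison of `λ*_{k,IM}` with the well-mixed threshold reduces to the sign of `b_k^{IM}`.
-/

/-- The Ohtsuki–Nowak shift for imitation updating on a `k`-regular graph. -/
noncomputable def bIM (α β γ : ℝ) (k : ℕ) : ℝ :=
  (3 * (α + 2 * β) + (k : ℝ) * (γ + α)) / (((k : ℝ) + 3) * ((k : ℝ) - 2))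

/-- Within-group selection gradient for IM updating on a `k`-regular graph. -/
noncomputable def jIM (α β γ : ℝ) (k : ℕ) (x : ℝ) : ℝ :=
  β + α * x + bIM α β γ k

noncomputable def scaleIM (α : ℝ) (k : ℕ) : ℝ :=
  2 * k * (-α) / ((k + 3) * (k - 2))

lemma scaleIM_pos {α : ℝ} (hα : α < 0) {k : ℕ} (hk : (2 : ℝ) < k) : 0 < scaleIM α k := by
  have hk0 : (0 : ℝ) < k := by linarith
  exact div_pos (by nlinarith) (by nlinarith)

section

variable {α : ℝ} (β γ : ℝ) {k : ℕ}

lemma bIM_eq_scaleIM_mul (hα : α ≠ 0) (hk : (k : ℝ) ≠ 0) :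
    bIM α β γ k =
      scaleIM α k * (γ / (-2 * α) - ((k + 3) / (2 * k) + (3 / k) * (β / α))) := by
  rw [bIM, scaleIM, div_mul_eq_mul_div]
  congr 1
  field_simp
  ring

lemma jIM_eq_scaleIM_mul (hα : α ≠ 0) (hk : (k : ℝ) ≠ 0) (hk2 : (k : ℝ) - 2 ≠ 0)
    (x : ℝ) :
    jIM α β γ k x = scaleIM α k *
      (γ / (-2 * α) - ((k + 3) * (1 + (k - 2) * x) / (2 * k) + ((k + 1) / 2) * (β / α))) := by
  rw [jIM, bIM_eq_scaleIM_mul β γ hα hk, ← sub_eq_zero]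
  have hk3 : (k : ℝ) + 3 ≠ 0 := by positivity
  unfold scaleIM
  field_simp
  ring

lemma bIM_pos_iff (hα : α < 0) (hk : (2 : ℝ) < k) :
    0 < bIM α β γ k ↔ (k + 3) / (2 * k) + (3 / k) * (β / α) < γ / (-2 * α) := by
  rw [bIM_eq_scaleIM_mul β γ hα.ne (by positivity), mul_pos_iff_of_pos_left (scaleIM_pos hα hk),
    sub_pos]

lemma jIM_pos_iff (hα : α < 0) (hk : (2 : ℝ) < k) (x : ℝ) :
    0 < jIM α β γ k x ↔
      (k + 3) * (1 + (k - 2) * x) / (2 * k) + ((k + 1) / 2) * (β / α) < γ / (-2 * α) := by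
  rw [jIM_eq_scaleIM_mul β γ hα.ne (by positivity) (sub_pos.2 hk).ne',
    mul_pos_iff_of_pos_left (scaleIM_pos hα hk), sub_pos]

end

lemma neg_add_mul_div_lt_neg_mul_div_iff {a b c θ : ℝ} (hc : 0 < c) (hθ : 0 < θ) :
    -(a + b) * θ / c < -a * θ / c ↔ 0 < b := by
  rw [div_lt_div_iff_of_pos_right hc, neg_add, add_mul, add_lt_iff_neg_left, neg_mul,
    neg_lt_zero]
  exact mul_pos_iff_of_pos_right hθ

/-- For PD games with `α < 0` and IM updating on a `k`-regular graph (`k ≥ 3`):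
(i) the full-defector equilibrium is unstable (`j_k^{IM}(0) > 0`) iff
`x* = γ/(-2α) > T_0^{IM}(k)`; (ii) the full-cooperator equilibrium is stable
(`j_k^{IM}(1) > 0`) iff `x* > T_1^{IM}(k)`; (iii) `b_k^{IM} > 0` iff
`x* > T_{λ*}^{IM}(k)`, and consequently, if `γ + α > 0` and `θ > 0`, the
multilevel threshold `λ*_{k,IM}` is below the well-mixed threshold
`-(β+α)θ/(γ+α)` iff `x* > T_{λ*}^{IM}(k)`. -/
theorem stmt10 (α β γ θ : ℝ) (hα : α < 0) (k : ℕ) (hk : 3 ≤ k) :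
    (jIM α β γ k 0 > 0 ↔
      γ / (-2 * α) > ((k : ℝ) + 3) / (2 * (k : ℝ)) + (((k : ℝ) + 1) / 2) * (β / α)) ∧
    (jIM α β γ k 1 > 0 ↔
      γ / (-2 * α) > ((k : ℝ) + 3) * ((k : ℝ) - 1) / (2 * (k : ℝ))
        + (((k : ℝ) + 1) / 2) * (β / α)) ∧
    (bIM α β γ k > 0 ↔
      γ / (-2 * α) > ((k : ℝ) + 3) / (2 * (k : ℝ)) + (3 / (k : ℝ)) * (β / α)) ∧
    (γ + α > 0 → θ > 0 →
      (-(β + α + bIM α β γ k) * θ / (γ + α) < -(β + α) * θ / (γ + α) ↔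
        γ / (-2 * α) > ((k : ℝ) + 3) / (2 * (k : ℝ)) + (3 / (k : ℝ)) * (β / α))) := by
  have hk2 : (2 : ℝ) < k := by exact_mod_cast hk
  have hb := bIM_pos_iff β γ hα hk2
  refine ⟨?_, ?_, hb, fun hγα hθ => (neg_add_mul_div_lt_neg_mul_div_iff hγα hθ).trans hb⟩
  · simpa only [mul_zero, add_zero, mul_one] using jIM_pos_iff β γ hα hk2 0
  · simpa only [mul_one, show (1 : ℝ) + (k - 2) = k - 1 by ring] using
      jIM_pos_iff β γ hα hk2 1
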